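/- arXiv:2508.18030 — 2 statements merged into one kernel-verified Lean document; each statement's English description precedes it below -/
import Mathlib

section
/- Let m be a positive integer and let (a,b) ∈ F_{2^m} × F_{2^m} with (a,b) ≠ (0,0). Define the integer S_4 = Σ_{x ∈ F_{2^m}^*} Σ_{y ∈ F_{2^m}} (−1)^{Tr(yx² + xy) + Tr(axy + bx)}. Then: S_4 = 0 if a = 1; S_4 = 2^m if either a = 0, b ≠ 0 and Tr(b) = 0, or a ∉ {0,1} and Tr((a+1)b) = 0; and S_4 = −2^m if either a = 0, b ≠ 0 and Tr(b) = 1, or a ∉ {0,1} and Tr((a+1)b) = 1. -/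
attribute [local instance] Classical.propDecidable

noncomputable instance (m : ℕ) : Fintype (GaloisField 2 m) := Fintype.ofFinite _

/-- The absolute trace map from `F_{2^m}` to `F_2`. -/
noncomputable def Tr (m : ℕ) (x : GaloisField 2 m) : ZMod 2 :=
  Algebra.trace (ZMod 2) (GaloisField 2 m) x

/-- For `t ∈ F_2`, `sgn t` is the integer `(-1)^t`. -/
def sgn : ZMod 2 → ℤ := fun t => if t = 0 then 1 else -1

/-- The set `Υ₁ = {r + r⁻¹ : r ∈ F_{2^m}^*, r ≠ 1}`. -/
def Ups1 (m : ℕ) : Set (GaloisField 2 m) :=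
  {u | ∃ r : GaloisField 2 m, r ≠ 0 ∧ r ≠ 1 ∧ u = r + r⁻¹}

/-!
For fixed `x`, the summand factors as `(-1)^{Tr((x² + (a+1)x) y)} (-1)^{Tr(bx)}`, and the sum
over `y` of the nontrivial additive character `y ↦ (-1)^{Tr(cy)}` is `2^m` if `c = 0` and `0`
otherwise.
For `x ≠ 0`, `x² + (a+1)x = x (x + a + 1)` vanishes only at `x = a + 1`, which is a nonzero point
exactly when `a ≠ 1`; so `S₄ = 2^m (-1)^{Tr((a+1)b)}` unless `a = 1`, when `S₄ = 0`.
-/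

lemma sgn_add : ∀ s t : ZMod 2, sgn (s + t) = sgn s * sgn t := by decide

lemma Tr_add (m : ℕ) (u v : GaloisField 2 m) : Tr m (u + v) = Tr m u + Tr m v :=
  map_add _ u v

noncomputable def trChar (m : ℕ) : AddChar (GaloisField 2 m) ℤ where
  toFun y := sgn (Tr m y)
  map_zero_eq_one' := by simp [Tr, sgn]
  map_add_eq_mul' u v := by rw [Tr_add, sgn_add]

lemma trChar_apply (m : ℕ) (y : GaloisField 2 m) : trChar m y = sgn (Tr m y) := rfl

lemma trChar_isPrimitive (m : ℕ) : (trChar m).IsPrimitive := by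
  refine AddChar.IsPrimitive.of_ne_one fun h => ?_
  obtain ⟨z, hz⟩ := Algebra.trace_surjective (ZMod 2) (GaloisField 2 m) 1
  have hz' : trChar m z = -1 := by simp [trChar_apply, Tr, hz, sgn]
  simp [h] at hz'

lemma card_galoisField_two {m : ℕ} (hm : m ≠ 0) : Fintype.card (GaloisField 2 m) = 2 ^ m := by
  rw [← Nat.card_eq_fintype_card, GaloisField.card 2 m hm]

lemma sum_trChar_mul {m : ℕ} (hm : m ≠ 0) (c : GaloisField 2 m) :
    ∑ y, trChar m (y * c) = if c = 0 then (2 ^ m : ℤ) else 0 := by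
  rw [AddChar.sum_mulShift c (trChar_isPrimitive m), card_galoisField_two hm]
  push_cast
  rfl

lemma sum_sgn_Tr_quadratic {m : ℕ} (hm : m ≠ 0) (a b x : GaloisField 2 m) :
    ∑ y, sgn (Tr m (y * x ^ 2 + x * y) + Tr m (a * x * y + b * x)) =
      if x * (x + (a + 1)) = 0 then 2 ^ m * sgn (Tr m (b * x)) else 0 := by
  have hterm : ∀ y, sgn (Tr m (y * x ^ 2 + x * y) + Tr m (a * x * y + b * x)) =
      trChar m (y * (x * (x + (a + 1)))) * trChar m (b * x) := fun y => by
    rw [← Tr_add, ← trChar_apply, ← AddChar.map_add_eq_mul]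
    ring_nf
  rw [Finset.sum_congr rfl fun y _ => hterm y, ← Finset.sum_mul, sum_trChar_mul hm, ite_mul,
    zero_mul, trChar_apply]

lemma sum_filter_ne_zero_sgn_Tr_quadratic {m : ℕ} (hm : m ≠ 0) (a b : GaloisField 2 m) :
    ∑ x ∈ Finset.univ.filter (fun x : GaloisField 2 m => x ≠ 0),
      ∑ y, sgn (Tr m (y * x ^ 2 + x * y) + Tr m (a * x * y + b * x)) =
      if a = 1 then 0 else 2 ^ m * sgn (Tr m ((a + 1) * b)) := by
  have hroot : ∀ x ∈ Finset.univ.filter (fun x : GaloisField 2 m => x ≠ 0),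
      x * (x + (a + 1)) = 0 ↔ x = a + 1 := fun x hx => by
    rw [mul_eq_zero, CharTwo.add_eq_zero, or_iff_right (Finset.mem_filter.mp hx).2]
  rw [Finset.sum_congr rfl fun x hx => by
    rw [sum_sgn_Tr_quadratic hm, if_congr (hroot x hx) rfl rfl], Finset.sum_ite_eq']
  simp [CharTwo.add_eq_zero, mul_comm b]

theorem stmt7_general (m : ℕ) (hm : 0 < m) (a b : GaloisField 2 m) :
    let S4 : ℤ := ∑ x ∈ Finset.univ.filter (fun x : GaloisField 2 m => x ≠ 0),
      ∑ y : GaloisField 2 m, sgn (Tr m (y * x ^ 2 + x * y) + Tr m (a * x * y + b * x))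
    (a = 1 → S4 = 0) ∧
    ((a = 0 ∧ b ≠ 0 ∧ Tr m b = 0) ∨ (a ≠ 0 ∧ a ≠ 1 ∧ Tr m ((a + 1) * b) = 0) →
      S4 = 2 ^ m) ∧
    ((a = 0 ∧ b ≠ 0 ∧ Tr m b = 1) ∨ (a ≠ 0 ∧ a ≠ 1 ∧ Tr m ((a + 1) * b) = 1) →
      S4 = -(2 ^ m : ℤ)) := by
  intro S4
  have hS4 : S4 = if a = 1 then 0 else 2 ^ m * sgn (Tr m ((a + 1) * b)) :=
    sum_filter_ne_zero_sgn_Tr_quadratic hm.ne' a b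
  refine ⟨fun ha => by simp [hS4, ha], ?_, ?_⟩ <;>
    rintro (⟨rfl, -, htr⟩ | ⟨-, ha1, htr⟩) <;> simp [sgn, *]

theorem stmt7 (m : ℕ) (hm : 0 < m) (a b : GaloisField 2 m) (hab : (a, b) ≠ (0, 0)) :
    let S4 : ℤ := ∑ x ∈ Finset.univ.filter (fun x : GaloisField 2 m => x ≠ 0),
      ∑ y : GaloisField 2 m, sgn (Tr m (y * x ^ 2 + x * y) + Tr m (a * x * y + b * x))
    (a = 1 → S4 = 0) ∧
    ((a = 0 ∧ b ≠ 0 ∧ Tr m b = 0) ∨ (a ≠ 0 ∧ a ≠ 1 ∧ Tr m ((a + 1) * b) = 0) →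
      S4 = 2 ^ m) ∧
    ((a = 0 ∧ b ≠ 0 ∧ Tr m b = 1) ∨ (a ≠ 0 ∧ a ≠ 1 ∧ Tr m ((a + 1) * b) = 1) →
      S4 = -(2 ^ m : ℤ)) :=
  stmt7_general m hm a b
end

section
/- Let m ≥ 3 be odd. For a weight value w, let A_w = #{(a,b) ∈ F_{2^m} × F_{2^m} : wt(c(a,b)) = w}, where wt(c(a,b)) = #{(x,y) ∈ D_2 : Tr(axy + bx) = 1}. Then A_0 = 1 (attained only by (a,b) = (0,0)), A_{2^m(2^{m−2}−1)} = 2^{m−2}(2^{m−1} − 1), A_{2^{m−1}(2^{m−1}−1)} = 3·2^{2m−2}, A_{2^{2m−2}} = 2^{m−2}(2^{m−1} + 1) − 1, and A_w = 0 for every other value of w. In particular, the code C_{D_2} has length 2^m(2^{m−1} − 1), exactly 2^{2m} codewords, minimum distance 2^m(2^{m−2} − 1), and exactly three nonzero weights. -/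
attribute [local instance] Classical.propDecidable

/-
Fix `x`. Since `y x² + x + y = (x² + 1) y + x`, the column `{y | (x, y) ∈ D₂}` is empty for
`x ∈ {0, 1}` (for `x = 1` because `Tr 1 = 1`, `m` being odd) and is otherwise the affine hyperplane
`Tr ((x² + 1) y) = Tr x`; the codeword condition adds `Tr (a x y) = 1 + Tr (b x)`. Two independent
trace conditions cut out `2^(m-2)` points and a single one `2^(m-1)`; the two conditions are
dependent exactly when `a = 0` or `x² + a x + 1 = 0`. For `a ≠ 0` this quadratic has no root, and
then `wt(a, b) = 2^(m-1) (2^(m-1) - 1)`, or two roots `r ≠ r⁻¹`, and then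
`wt(a, b) = 2^m (2^(m-2) - 1) + 2^(m-1) (Tr (r (1 + b)) + Tr (r⁻¹ (1 + b)))`, where the two traces
are equidistributed in `b`. Since `r ↦ r + r⁻¹` is two-to-one from `𝔽 \ {0, 1}`, exactly
`2^(m-1) - 1` values of `a` are of the second kind. Counting `b` in each case gives the weight
distribution, from which the remaining claims are read off.
-/

open Finset

abbrev GF (m : ℕ) := GaloisField 2 m

theorem AddMonoidHom.card_fiber_mul_card_of_surjective {G M : Type*} [AddGroup G] [Fintype G]
    [AddMonoid M] [Fintype M] [DecidableEq M] (f : G →+ M) (hf : Function.Surjective f) (v : M) :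
    #{g | f g = v} * Fintype.card M = Fintype.card G := by
  have h := card_eq_sum_card_fiberwise (s := univ) (t := univ) (f := f) fun _ _ => mem_univ _
  rw [sum_congr rfl fun w _ => AddMonoidHom.card_fiber_eq_of_mem_range f (hf w) (hf v), sum_const,
    smul_eq_mul, card_univ, card_univ] at h
  rw [h, mul_comm]

theorem card_filter_comp_eq_mul {α β : Type*} [Fintype α] [Fintype β] [DecidableEq β]
    (φ : α → β) {k : ℕ} (hφ : ∀ p, #{a | φ a = p} = k) (g : β → ℕ) (w : ℕ) :
    #{a | g (φ a) = w} = k * #{p | g p = w} := by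
  rw [card_eq_sum_card_fiberwise (f := φ) (t := {p | g p = w}) fun a ha => by simpa using ha,
    sum_congr rfl fun p hp => ?_, sum_const, smul_eq_mul, mul_comm]
  rw [← hφ p]
  congr 1
  ext a
  simp only [mem_filter, mem_univ, true_and] at hp ⊢
  exact ⟨fun h => h.2, fun h => ⟨h ▸ hp, h⟩⟩

theorem card_filter_prod_eq_sum {α β : Type*} [Fintype α] [Fintype β] (P : α × β → Prop)
    [DecidablePred P] : #{p | P p} = ∑ x, #{y | P (x, y)} := by
  simp only [card_filter, Fintype.sum_prod_type]

variable {m : ℕ}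

theorem card_GF (hm : m ≠ 0) : Fintype.card (GF m) = 2 ^ m := by
  rw [← Nat.card_eq_fintype_card, GaloisField.card 2 m hm]

theorem tr_add (x y : GF m) : Tr m (x + y) = Tr m x + Tr m y := map_add _ x y

theorem tr_zero : Tr m 0 = 0 := map_zero _

theorem tr_one_of_odd (hodd : Odd m) : Tr m 1 = 1 := by
  have hm : m ≠ 0 := by rintro rfl; simp at hodd
  rw [Tr, ← map_one (algebraMap (ZMod 2) (GF m)), Algebra.trace_algebraMap,
    GaloisField.finrank 2 hm, nsmul_eq_mul, mul_one]
  obtain ⟨k, rfl⟩ := hodd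
  simp [CharTwo.two_eq_zero]

theorem zmod_two_eq_zero_or_eq_one : ∀ t : ZMod 2, t = 0 ∨ t = 1 := by decide

theorem zmod_two_val_eq_ite : ∀ t : ZMod 2, t.val = if t = 1 then 1 else 0 := by decide

theorem card_filter_val_add_val (base step w : ℕ) :
    #{p : ZMod 2 × ZMod 2 | base + step * (p.1.val + p.2.val) = w} =
      (if base = w then 1 else 0) + 2 * (if base + step = w then 1 else 0)
        + (if base + step + step = w then 1 else 0) := by
  rw [card_filter, Fintype.sum_prod_type]
  simp only [show ∀ f : ZMod 2 → ℕ, ∑ e, f e = f 0 + f 1 from Fin.sum_univ_two]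
  simp only [ZMod.val_zero, ZMod.val_one]
  ring_nf

theorem exists_tr_mul_eq_one {c : GF m} (hc : c ≠ 0) : ∃ y, Tr m (c * y) = 1 := by
  by_contra! h
  refine hc ((traceForm_nondegenerate (ZMod 2) (GF m)).1 c fun y => ?_)
  rw [Algebra.traceForm_apply]
  exact (zmod_two_eq_zero_or_eq_one _).resolve_right (h y)

noncomputable def trMul (c : GF m) : GF m →+ ZMod 2 :=
  (Algebra.trace (ZMod 2) (GF m)).toAddMonoidHom.comp (AddMonoidHom.mulLeft c)

theorem trMul_apply (c y : GF m) : trMul c y = Tr m (c * y) := rfl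

theorem trMul_surjective {c : GF m} (hc : c ≠ 0) : Function.Surjective (trMul c) := by
  obtain ⟨u, hu⟩ := exists_tr_mul_eq_one hc
  intro ε
  rcases zmod_two_eq_zero_or_eq_one ε with rfl | rfl
  exacts [⟨0, map_zero _⟩, ⟨u, hu⟩]

/-- Both coordinates and their sum are onto `𝔽₂`, and no proper subgroup of `𝔽₂²` meets all three
of the sets `{t.1 = 1}`, `{t.2 = 1}`, `{t.1 + t.2 = 1}`. -/
theorem trMul_prod_surjective {c d : GF m} (hc : c ≠ 0) (hd : d ≠ 0) (hcd : c ≠ d) :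
    Function.Surjective ((trMul c).prod (trMul d)) := by
  set f := (trMul c).prod (trMul d)
  obtain ⟨u, hu⟩ := trMul_surjective hc 1
  obtain ⟨v, hv⟩ := trMul_surjective hd 1
  obtain ⟨w, hw⟩ := trMul_surjective (mt CharTwo.add_eq_zero.mp hcd) 1
  have hw' : (f w).1 + (f w).2 = 1 := by
    rw [← hw, trMul_apply, add_mul, tr_add]; rfl
  have key : ∀ p q r t : ZMod 2 × ZMod 2, p.1 = 1 → q.2 = 1 → r.1 + r.2 = 1 →
      t = 0 ∨ t = p ∨ t = q ∨ t = r ∨ t = p + q ∨ t = p + r ∨ t = q + r := by decide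
  intro t
  rcases key (f u) (f v) (f w) t hu hv hw' with rfl | rfl | rfl | rfl | rfl | rfl | rfl
  exacts [⟨0, map_zero f⟩, ⟨u, rfl⟩, ⟨v, rfl⟩, ⟨w, rfl⟩, ⟨u + v, map_add f u v⟩,
    ⟨u + w, map_add f u w⟩, ⟨v + w, map_add f v w⟩]

theorem card_tr_mul_eq (hm : m ≠ 0) {c : GF m} (hc : c ≠ 0) (ε : ZMod 2) :
    #{y | Tr m (c * y) = ε} = 2 ^ (m - 1) := by
  have h := (trMul c).card_fiber_mul_card_of_surjective (trMul_surjective hc) ε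
  rw [ZMod.card, card_GF hm, ← Nat.two_pow_pred_mul_two hm.bot_lt] at h
  exact Nat.eq_of_mul_eq_mul_right two_pos h

theorem card_tr_mul_eq_and_tr_mul_eq (hm : 2 ≤ m) {c d : GF m} (hc : c ≠ 0) (hd : d ≠ 0)
    (hcd : c ≠ d) (ε δ : ZMod 2) :
    #{y | Tr m (c * y) = ε ∧ Tr m (d * y) = δ} = 2 ^ (m - 2) := by
  have h := ((trMul c).prod (trMul d)).card_fiber_mul_card_of_surjective
    (trMul_prod_surjective hc hd hcd) (ε, δ)
  rw [Fintype.card_prod, ZMod.card, card_GF (by omega),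
    show 2 ^ m = 2 ^ (m - 2) * (2 * 2) by rw [← pow_two, ← pow_add, Nat.sub_add_cancel hm]] at h
  simpa [Prod.ext_iff, trMul_apply] using Nat.eq_of_mul_eq_mul_right (by norm_num) h

theorem card_tr_mul_eq_and (hm : m ≠ 0) {c : GF m} (hc : c ≠ 0) (ε t : ZMod 2) :
    #{y | Tr m (c * y) = ε ∧ t = 1} = 2 ^ (m - 1) * t.val := by
  rcases zmod_two_eq_zero_or_eq_one t with rfl | rfl
  · simp
  · simpa [ZMod.val_one] using card_tr_mul_eq hm hc ε

theorem card_compl_zero_one (hm : m ≠ 0) : #({0, 1}ᶜ : Finset (GF m)) = 2 ^ m - 2 := by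
  rw [card_compl, card_GF hm, card_pair zero_ne_one]

theorem sq_add_one_ne_zero {x : GF m} (hx : x ≠ 1) : x ^ 2 + 1 ≠ 0 := by
  rw [← one_pow 2, ← CharTwo.add_sq]
  exact pow_ne_zero 2 (mt CharTwo.add_eq_zero.mp hx)

section Quadratic

variable {a r x : GF m}

theorem sq_add_mul_add_one_eq_zero_iff : x ^ 2 + a * x + 1 = 0 ↔ x ≠ 0 ∧ x + x⁻¹ = a := by
  have h2 : (2 : GF m) = 0 := CharTwo.two_eq_zero
  constructor
  · intro h
    have hx : x ≠ 0 := by rintro rfl; simp at h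
    have hinv := mul_inv_cancel₀ hx
    exact ⟨hx, by linear_combination x⁻¹ * h - (x + a) * hinv - a * h2⟩
  · rintro ⟨hx, rfl⟩
    linear_combination mul_inv_cancel₀ hx + (x ^ 2 + 1) * h2

theorem add_inv_of_root (hr : r ^ 2 + a * r + 1 = 0) : r + r⁻¹ = a :=
  (sq_add_mul_add_one_eq_zero_iff.mp hr).2

theorem sq_add_mul_add_one_eq_zero_iff_of_root (hr : r ^ 2 + a * r + 1 = 0) :
    x ^ 2 + a * x + 1 = 0 ↔ x = r ∨ x = r⁻¹ := by
  obtain ⟨hr0, hsum⟩ := sq_add_mul_add_one_eq_zero_iff.mp hr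
  have h2 : (2 : GF m) = 0 := CharTwo.two_eq_zero
  have hfac : x ^ 2 + a * x + 1 = (x - r) * (x - r⁻¹) := by
    linear_combination x * hsum - mul_inv_cancel₀ hr0 + a * x * h2
  rw [hfac, mul_eq_zero, sub_eq_zero, sub_eq_zero]

theorem inv_ne_self_of_root (ha : a ≠ 0) (hr : r ^ 2 + a * r + 1 = 0) : r⁻¹ ≠ r := by
  intro h
  rw [← add_inv_of_root hr, h, CharTwo.add_self_eq_zero] at ha
  exact ha rfl

theorem ne_one_of_root (ha : a ≠ 0) (hr : r ^ 2 + a * r + 1 = 0) : r ≠ 1 := by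
  rintro rfl
  exact inv_ne_self_of_root ha hr inv_one

theorem add_inv_ne_zero (hr0 : r ≠ 0) (hr1 : r ≠ 1) : r + r⁻¹ ≠ 0 := by
  intro h
  refine hr1 (CharTwo.sq_inj.mp ?_)
  rw [one_pow, sq]
  exact (congrArg (r * ·) (CharTwo.add_eq_zero.mp h)).trans (mul_inv_cancel₀ hr0)

/-- `r ↦ r + r⁻¹` maps `𝔽 \ {0, 1}` two-to-one onto the `a ≠ 0` for which `x² + a x + 1` has a
root. -/
theorem card_filter_exists_root (hm : m ≠ 0) :
    #{a : GF m | a ≠ 0 ∧ ∃ r, r ^ 2 + a * r + 1 = 0} = 2 ^ (m - 1) - 1 := by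
  have hmaps : ∀ r ∈ ({0, 1}ᶜ : Finset (GF m)),
      r + r⁻¹ ∈ ({a | a ≠ 0 ∧ ∃ r, r ^ 2 + a * r + 1 = 0} : Finset (GF m)) := by
    intro r hr
    simp only [mem_compl, mem_insert, mem_singleton, not_or] at hr
    simp only [mem_filter, mem_univ, true_and]
    exact ⟨add_inv_ne_zero hr.1 hr.2, r, sq_add_mul_add_one_eq_zero_iff.mpr ⟨hr.1, rfl⟩⟩
  have hfibre : ∀ a ∈ ({a | a ≠ 0 ∧ ∃ r, r ^ 2 + a * r + 1 = 0} : Finset (GF m)),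
      #{r ∈ ({0, 1}ᶜ : Finset (GF m)) | r + r⁻¹ = a} = 2 := by
    intro a ha
    simp only [mem_filter, mem_univ, true_and] at ha
    obtain ⟨ha, r, hr⟩ := ha
    refine (congrArg card ?_).trans (card_pair (inv_ne_self_of_root ha hr).symm)
    ext x
    simp only [mem_filter, mem_compl, mem_insert, mem_singleton, not_or,
      ← sq_add_mul_add_one_eq_zero_iff_of_root hr, sq_add_mul_add_one_eq_zero_iff]
    constructor
    · rintro ⟨⟨hx0, -⟩, hx⟩
      exact ⟨hx0, hx⟩
    · rintro ⟨hx0, hx⟩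
      exact ⟨⟨hx0, fun hx1 => ha (by rw [← hx, hx1, inv_one, CharTwo.add_self_eq_zero])⟩, hx⟩
  have h := card_eq_sum_card_fiberwise hmaps
  rw [sum_congr rfl hfibre, sum_const, smul_eq_mul, card_compl_zero_one hm,
    ← Nat.two_pow_pred_mul_two hm.bot_lt] at h
  omega

end Quadratic

noncomputable def D2 (m : ℕ) : Finset (GF m × GF m) :=
  {p | p.1 ≠ 0 ∧ Tr m (p.2 * p.1 ^ 2 + p.1 + p.2) = 0}

noncomputable def wt (m : ℕ) (a b : GF m) : ℕ :=
  #{p ∈ D2 m | Tr m (a * p.1 * p.2 + b * p.1) = 1}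

def lowWeight (m : ℕ) : ℕ := 2 ^ m * (2 ^ (m - 2) - 1)

def midWeight (m : ℕ) : ℕ := 2 ^ (m - 1) * (2 ^ (m - 1) - 1)

def highWeight (m : ℕ) : ℕ := 2 ^ (2 * m - 2)

section Arithmetic

variable (hm : 2 ≤ m)
include hm

theorem two_pow_eq_four_mul : 2 ^ m = 4 * 2 ^ (m - 2) := by
  rw [show 4 = 2 ^ 2 by rfl, ← pow_add, Nat.add_sub_cancel' hm]

theorem two_pow_pred_eq_two_mul : 2 ^ (m - 1) = 2 * 2 ^ (m - 2) := by
  rw [← pow_succ', show m - 2 + 1 = m - 1 by omega]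

theorem highWeight_eq : highWeight m = 4 * 2 ^ (m - 2) * 2 ^ (m - 2) := by
  rw [highWeight, show 2 * m - 2 = 2 + (m - 2) + (m - 2) by omega, pow_add, pow_add]; rfl

theorem lowWeight_add : lowWeight m + 2 ^ (m - 1) = midWeight m := by
  rw [lowWeight, midWeight, two_pow_eq_four_mul hm, two_pow_pred_eq_two_mul hm]
  have := Nat.one_le_two_pow (n := m - 2)
  generalize 2 ^ (m - 2) = t at *
  zify [this, show 1 ≤ 2 * t by omega]
  ring

theorem midWeight_add : midWeight m + 2 ^ (m - 1) = highWeight m := by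
  rw [highWeight_eq hm, midWeight, two_pow_pred_eq_two_mul hm]
  have := Nat.one_le_two_pow (n := m - 2)
  generalize 2 ^ (m - 2) = t at *
  zify [show 1 ≤ 2 * t by omega]
  ring

theorem sub_two_mul_two_pow_sub_two : (2 ^ m - 2) * 2 ^ (m - 2) = midWeight m := by
  rw [midWeight, two_pow_eq_four_mul hm, two_pow_pred_eq_two_mul hm]
  have := Nat.one_le_two_pow (n := m - 2)
  generalize 2 ^ (m - 2) = t at *
  zify [show 2 ≤ 4 * t by omega, show 1 ≤ 2 * t by omega]
  ring

theorem sub_four_mul_two_pow_sub_two : (2 ^ m - 2 - 2) * 2 ^ (m - 2) = lowWeight m := by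
  rw [lowWeight, two_pow_eq_four_mul hm]
  have := Nat.one_le_two_pow (n := m - 2)
  generalize 2 ^ (m - 2) = t at *
  zify [show 2 ≤ 4 * t by omega, show 2 ≤ 4 * t - 2 by omega, this]
  ring

end Arithmetic

theorem highWeight_eq_two_pow_pred_mul (hm : m ≠ 0) : highWeight m = 2 ^ (m - 1) * 2 ^ (m - 1) := by
  obtain ⟨k, rfl⟩ := Nat.exists_eq_succ_of_ne_zero hm
  rw [highWeight, ← pow_add]; congr 1; omega

theorem wt_zero_zero : wt m 0 0 = 0 := by
  simp [wt, tr_zero]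

section Columns

variable {a x : GF m} (hx : x ∈ ({0, 1}ᶜ : Finset (GF m)))
include hx

theorem ne_one_of_mem_compl_zero_one : x ≠ 1 := by
  simp_all

theorem card_column_zero_left (hm : m ≠ 0) (b : GF m) :
    #{y | Tr m ((x ^ 2 + 1) * y) = Tr m x ∧ Tr m (0 * x * y + b * x) = 1} =
      2 ^ (m - 1) * (Tr m (b * x)).val := by
  simp only [zero_mul, zero_add]
  exact card_tr_mul_eq_and hm (sq_add_one_ne_zero (ne_one_of_mem_compl_zero_one hx)) _ _

theorem card_column_of_root (hm : m ≠ 0) (hroot : x ^ 2 + a * x + 1 = 0) (b : GF m) :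
    #{y | Tr m ((x ^ 2 + 1) * y) = Tr m x ∧ Tr m (a * x * y + b * x) = 1} =
      2 ^ (m - 1) * (Tr m (x * (1 + b))).val := by
  have hax : a * x = x ^ 2 + 1 := by
    linear_combination hroot - (x ^ 2 + 1) * (CharTwo.two_eq_zero : (2 : GF m) = 0)
  rw [← card_tr_mul_eq_and hm (sq_add_one_ne_zero (ne_one_of_mem_compl_zero_one hx))]
  congr 1
  ext y
  simp only [mem_filter, mem_univ, true_and, hax, tr_add, mul_add, mul_one, mul_comm x b]
  constructor
  · rintro ⟨h1, h2⟩
    exact ⟨h1, h1 ▸ h2⟩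
  · rintro ⟨h1, h2⟩
    exact ⟨h1, h1.symm ▸ h2⟩

theorem card_column_of_not_root (hm : 2 ≤ m) (ha : a ≠ 0) (hroot : x ^ 2 + a * x + 1 ≠ 0)
    (b : GF m) :
    #{y | Tr m ((x ^ 2 + 1) * y) = Tr m x ∧ Tr m (a * x * y + b * x) = 1} = 2 ^ (m - 2) := by
  have hx0 : x ≠ 0 := by simp_all
  have hne : x ^ 2 + 1 ≠ a * x := fun h => hroot <| by
    linear_combination h + a * x * (CharTwo.two_eq_zero : (2 : GF m) = 0)
  rw [← card_tr_mul_eq_and_tr_mul_eq hm (sq_add_one_ne_zero (ne_one_of_mem_compl_zero_one hx))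
    (mul_ne_zero ha hx0) hne (Tr m x) (1 + Tr m (b * x))]
  congr 1
  ext y
  simp only [mem_filter, mem_univ, true_and, tr_add, CharTwo.add_eq_iff_eq_add, mul_assoc]

end Columns

section Weights

variable (hodd : Odd m)
include hodd

theorem mk_mem_D2_iff {x y : GF m} :
    (x, y) ∈ D2 m ↔ x ∈ ({0, 1}ᶜ : Finset (GF m)) ∧ Tr m ((x ^ 2 + 1) * y) = Tr m x := by
  have hsplit : y * x ^ 2 + x + y = (x ^ 2 + 1) * y + x := by ring
  simp only [D2, mem_filter, mem_univ, true_and]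
  rw [hsplit, tr_add, CharTwo.add_eq_zero]
  simp only [mem_compl, mem_insert, mem_singleton, not_or, and_assoc]
  refine and_congr_right fun _ => ⟨fun h => ⟨?_, h⟩, fun h => h.2⟩
  rintro rfl
  rw [one_pow, CharTwo.add_self_eq_zero, zero_mul, tr_zero, tr_one_of_odd hodd] at h
  exact zero_ne_one h

theorem card_filter_D2 (Q : GF m → GF m → Prop) [∀ x, DecidablePred (Q x)] :
    #{p ∈ D2 m | Q p.1 p.2} =
      ∑ x ∈ {0, 1}ᶜ, #{y | Tr m ((x ^ 2 + 1) * y) = Tr m x ∧ Q x y} := by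
  have hD2 : (D2 m).filter (fun p => Q p.1 p.2) = ({p | p ∈ D2 m ∧ Q p.1 p.2} : Finset _) := by
    ext; simp
  rw [hD2, card_filter_prod_eq_sum, ← sum_subset (subset_univ ({0, 1}ᶜ : Finset (GF m)))]
  · refine sum_congr rfl fun x hx => ?_
    simp only [mk_mem_D2_iff hodd, hx, true_and]
  · intro x _ hx
    simp only [mk_mem_D2_iff hodd, hx, false_and, filter_false, card_empty]

theorem wt_eq_sum (a b : GF m) :
    wt m a b = ∑ x ∈ {0, 1}ᶜ,
      #{y | Tr m ((x ^ 2 + 1) * y) = Tr m x ∧ Tr m (a * x * y + b * x) = 1} :=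
  card_filter_D2 hodd fun x y => Tr m (a * x * y + b * x) = 1

theorem card_D2 : #(D2 m) = 2 ^ m * (2 ^ (m - 1) - 1) := by
  have hm : m ≠ 0 := by rintro rfl; simp at hodd
  have h := card_filter_D2 hodd fun _ _ => True
  simp only [and_true, filter_true] at h
  rw [h, sum_congr rfl fun x hx => card_tr_mul_eq hm (sq_add_one_ne_zero ?_) _, sum_const,
    smul_eq_mul, card_compl_zero_one hm, ← Nat.two_pow_pred_mul_two hm.bot_lt]
  · have := Nat.one_le_two_pow (n := m - 1)
    generalize 2 ^ (m - 1) = s at *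
    zify [show 2 ≤ s * 2 by omega, this]
    ring
  · simp_all

theorem wt_zero_left {b : GF m} (hb : b ≠ 0) :
    wt m 0 b = 2 ^ (m - 1) * (2 ^ (m - 1) - (Tr m b).val) := by
  have hm : m ≠ 0 := by rintro rfl; simp at hodd
  rw [wt_eq_sum hodd, sum_congr rfl fun x hx => card_column_zero_left hx hm b, ← mul_sum]
  congr 1
  have htot : ∑ x, (Tr m (b * x)).val = 2 ^ (m - 1) := by
    simp_rw [zmod_two_val_eq_ite]
    rw [sum_boole, Nat.cast_id, card_tr_mul_eq hm hb]
  have hsplit := sum_compl_add_sum ({0, 1} : Finset (GF m)) fun x => (Tr m (b * x)).val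
  rw [sum_pair zero_ne_one, mul_zero, mul_one, tr_zero, ZMod.val_zero, zero_add, htot] at hsplit
  omega

theorem wt_zero_left_eq_ite {b : GF m} (hb : b ≠ 0) :
    wt m 0 b = if Tr m b = 1 then midWeight m else highWeight m := by
  have hm : m ≠ 0 := by rintro rfl; simp at hodd
  rw [wt_zero_left hodd hb, highWeight_eq_two_pow_pred_mul hm]
  rcases zmod_two_eq_zero_or_eq_one (Tr m b) with h | h <;> simp [h, midWeight, ZMod.val_one]

theorem wt_of_forall_not_root (hm : 2 ≤ m) {a : GF m} (ha : a ≠ 0)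
    (hroot : ∀ r, r ^ 2 + a * r + 1 ≠ 0) (b : GF m) : wt m a b = midWeight m := by
  rw [wt_eq_sum hodd, sum_congr rfl fun x hx => card_column_of_not_root hx hm ha (hroot x) b,
    sum_const, smul_eq_mul, card_compl_zero_one (by omega), sub_two_mul_two_pow_sub_two hm]

theorem wt_of_root (hm : 2 ≤ m) {a r : GF m} (ha : a ≠ 0) (hr : r ^ 2 + a * r + 1 = 0)
    (b : GF m) :
    wt m a b =
      lowWeight m + 2 ^ (m - 1) * ((Tr m (r * (1 + b))).val + (Tr m (r⁻¹ * (1 + b))).val) := by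
  have hroots : ∀ x, x ^ 2 + a * x + 1 = 0 ↔ x ∈ ({r, r⁻¹} : Finset (GF m)) := by
    intro x
    rw [mem_insert, mem_singleton, sq_add_mul_add_one_eq_zero_iff_of_root hr]
  have hsub : ({r, r⁻¹} : Finset (GF m)) ⊆ {0, 1}ᶜ := by
    intro x hx
    have hx' := (hroots x).mpr hx
    simp only [mem_compl, mem_insert, mem_singleton, not_or]
    exact ⟨(sq_add_mul_add_one_eq_zero_iff.mp hx').1, ne_one_of_root ha hx'⟩
  rw [wt_eq_sum hodd, ← sum_sdiff hsub, sum_pair (inv_ne_self_of_root ha hr).symm,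
    card_column_of_root (hsub (by simp)) (by omega) hr,
    card_column_of_root (hsub (by simp)) (by omega) ((hroots _).mpr (by simp)), ← mul_add,
    sum_congr rfl fun x hx => card_column_of_not_root (sdiff_subset hx) hm ha
      (fun h => (mem_sdiff.mp hx).2 ((hroots x).mp h)) b,
    sum_const, smul_eq_mul, card_sdiff_of_subset hsub, card_compl_zero_one (by omega),
    card_pair (inv_ne_self_of_root ha hr).symm, sub_four_mul_two_pow_sub_two hm]

end Weights

section Distribution

variable (hodd : Odd m) (hm : 2 ≤ m)
include hodd hm

theorem card_wt_zero_left_eq (w : ℕ) :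
    #{b | wt m 0 b = w} = (if 0 = w then 1 else 0) + 2 ^ (m - 1) * (if midWeight m = w then 1 else 0)
      + (2 ^ (m - 1) - 1) * (if highWeight m = w then 1 else 0) := by
  have hm0 : m ≠ 0 := by omega
  have hone : #{b ∈ ({0}ᶜ : Finset (GF m)) | Tr m b = 1} = 2 ^ (m - 1) := by
    rw [← card_tr_mul_eq hm0 one_ne_zero 1]
    congr 1; ext b
    simp only [mem_filter, mem_univ, true_and, mem_compl, mem_singleton, one_mul,
      and_iff_right_iff_imp]
    rintro h rfl
    exact zero_ne_one (tr_zero.symm.trans h)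
  rw [card_filter, Fintype.sum_eq_add_sum_compl 0, wt_zero_zero,
    sum_congr rfl fun b hb => by rw [wt_zero_left_eq_ite hodd (by simpa using hb),
      apply_ite (fun v => if v = w then 1 else 0)],
    sum_ite, sum_const, sum_const, smul_eq_mul, smul_eq_mul, filter_not,
    card_sdiff_of_subset (filter_subset _ _), hone, card_compl, card_singleton, card_GF hm0,
    two_pow_eq_four_mul hm, two_pow_pred_eq_two_mul hm]
  rw [show 4 * 2 ^ (m - 2) - 1 - 2 * 2 ^ (m - 2) = 2 * 2 ^ (m - 2) - 1 by omega]
  ring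

theorem card_wt_of_root_eq {a r : GF m} (ha : a ≠ 0) (hr : r ^ 2 + a * r + 1 = 0) (w : ℕ) :
    #{b | wt m a b = w} = 2 ^ (m - 2) * ((if lowWeight m = w then 1 else 0)
      + 2 * (if midWeight m = w then 1 else 0) + (if highWeight m = w then 1 else 0)) := by
  have hr0 := (sq_add_mul_add_one_eq_zero_iff.mp hr).1
  have hfibre : ∀ p : ZMod 2 × ZMod 2,
      #{b | (Tr m (r * (1 + b)), Tr m (r⁻¹ * (1 + b))) = p} = 2 ^ (m - 2) := by
    rintro ⟨ε, δ⟩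
    rw [← card_tr_mul_eq_and_tr_mul_eq hm hr0 (inv_ne_zero hr0) (inv_ne_self_of_root ha hr).symm
      (ε + Tr m r) (δ + Tr m r⁻¹)]
    congr 1; ext b
    simp only [mem_filter, mem_univ, true_and, Prod.mk.injEq, mul_add, mul_one, tr_add]
    rw [add_comm (Tr m r), add_comm (Tr m r⁻¹), CharTwo.add_eq_iff_eq_add,
      CharTwo.add_eq_iff_eq_add]
  simp_rw [wt_of_root hodd hm ha hr]
  rw [card_filter_comp_eq_mul (fun b => (Tr m (r * (1 + b)), Tr m (r⁻¹ * (1 + b)))) hfibre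
    (fun p => lowWeight m + 2 ^ (m - 1) * (p.1.val + p.2.val)), card_filter_val_add_val,
    lowWeight_add hm, midWeight_add hm]

theorem card_wt_of_forall_not_root {a : GF m} (ha : a ≠ 0) (hroot : ∀ r, r ^ 2 + a * r + 1 ≠ 0)
    (w : ℕ) : #{b | wt m a b = w} = 2 ^ m * (if midWeight m = w then 1 else 0) := by
  simp_rw [wt_of_forall_not_root hodd hm ha hroot]
  split_ifs with h
  · simp [h, card_GF (show m ≠ 0 by omega)]
  · simp [h]

theorem card_wt_eq (w : ℕ) :
    #{c : GF m × GF m | wt m c.1 c.2 = w} =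
      (if 0 = w then 1 else 0) + 2 ^ (m - 2) * (2 ^ (m - 1) - 1) * (if lowWeight m = w then 1 else 0)
        + 3 * 2 ^ (2 * m - 2) * (if midWeight m = w then 1 else 0)
        + (2 ^ (m - 2) * (2 ^ (m - 1) + 1) - 1) * (if highWeight m = w then 1 else 0) := by
  have hm0 : m ≠ 0 := by omega
  have hroots : #{a ∈ ({0}ᶜ : Finset (GF m)) | ∃ r, r ^ 2 + a * r + 1 = 0} = 2 ^ (m - 1) - 1 := by
    rw [← card_filter_exists_root hm0]
    congr 1; ext a
    simp
  have hsummand : ∀ a ∈ ({0}ᶜ : Finset (GF m)), #{b | wt m a b = w} =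
      if ∃ r, r ^ 2 + a * r + 1 = 0 then
        2 ^ (m - 2) * ((if lowWeight m = w then 1 else 0) + 2 * (if midWeight m = w then 1 else 0)
          + (if highWeight m = w then 1 else 0))
      else 2 ^ m * (if midWeight m = w then 1 else 0) := by
    intro a ha
    have ha : a ≠ 0 := by simpa using ha
    by_cases h : ∃ r, r ^ 2 + a * r + 1 = 0
    · obtain ⟨r, hr⟩ := h
      rw [if_pos ⟨r, hr⟩, card_wt_of_root_eq hodd hm ha hr w]
    · rw [if_neg h, card_wt_of_forall_not_root hodd hm ha (not_exists.mp h) w]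
  rw [card_filter_prod_eq_sum, Fintype.sum_eq_add_sum_compl 0, card_wt_zero_left_eq hodd hm,
    sum_congr rfl hsummand, sum_ite, sum_const, sum_const, smul_eq_mul, smul_eq_mul, filter_not,
    card_sdiff_of_subset (filter_subset _ _), hroots, card_compl, card_singleton, card_GF hm0]
  rw [show 2 ^ (2 * m - 2) = highWeight m from rfl, highWeight_eq hm, two_pow_eq_four_mul hm,
    two_pow_pred_eq_two_mul hm]
  have := Nat.one_le_two_pow (n := m - 2)
  generalize 2 ^ (m - 2) = t at *
  zify [show 1 ≤ 2 * t by omega, show 1 ≤ 4 * t by omega, show 2 * t - 1 ≤ 4 * t - 1 by omega,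
    show 1 ≤ t * (2 * t + 1) by nlinarith]
  ring

end Distribution

theorem zero_lt_lowWeight_lt_midWeight_lt_highWeight (hm : 3 ≤ m) :
    0 < lowWeight m ∧ lowWeight m < midWeight m ∧ midWeight m < highWeight m :=
  ⟨Nat.mul_pos (by positivity) (Nat.sub_pos_of_lt (Nat.one_lt_two_pow (by omega))),
    lowWeight_add (m := m) (by omega) ▸ Nat.lt_add_of_pos_right (by positivity),
    midWeight_add (m := m) (by omega) ▸ Nat.lt_add_of_pos_right (by positivity)⟩

section WeightDistribution

variable (hodd : Odd m) (hm : 3 ≤ m)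
include hodd hm

theorem card_wt_eq_zero : #{c : GF m × GF m | wt m c.1 c.2 = 0} = 1 := by
  obtain ⟨hL, hLM, hMH⟩ := zero_lt_lowWeight_lt_midWeight_lt_highWeight hm
  rw [card_wt_eq hodd (by omega)]
  simp [hL.ne', (hL.trans hLM).ne', (hL.trans (hLM.trans hMH)).ne']

theorem card_wt_eq_lowWeight :
    #{c : GF m × GF m | wt m c.1 c.2 = lowWeight m} = 2 ^ (m - 2) * (2 ^ (m - 1) - 1) := by
  obtain ⟨hL, hLM, hMH⟩ := zero_lt_lowWeight_lt_midWeight_lt_highWeight hm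
  rw [card_wt_eq hodd (by omega)]
  simp [hL.ne, hLM.ne', (hLM.trans hMH).ne']

theorem card_wt_eq_midWeight :
    #{c : GF m × GF m | wt m c.1 c.2 = midWeight m} = 3 * 2 ^ (2 * m - 2) := by
  obtain ⟨hL, hLM, hMH⟩ := zero_lt_lowWeight_lt_midWeight_lt_highWeight hm
  rw [card_wt_eq hodd (by omega)]
  simp [(hL.trans hLM).ne, hLM.ne, hMH.ne']

theorem card_wt_eq_highWeight :
    #{c : GF m × GF m | wt m c.1 c.2 = highWeight m} = 2 ^ (m - 2) * (2 ^ (m - 1) + 1) - 1 := by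
  obtain ⟨hL, hLM, hMH⟩ := zero_lt_lowWeight_lt_midWeight_lt_highWeight hm
  rw [card_wt_eq hodd (by omega)]
  simp [(hL.trans (hLM.trans hMH)).ne, (hLM.trans hMH).ne, hMH.ne]

theorem card_wt_eq_of_ne {w : ℕ} (h0 : w ≠ 0) (hL : w ≠ lowWeight m) (hM : w ≠ midWeight m)
    (hH : w ≠ highWeight m) : #{c : GF m × GF m | wt m c.1 c.2 = w} = 0 := by
  rw [card_wt_eq hodd (by omega)]
  simp [h0.symm, hL.symm, hM.symm, hH.symm]

theorem wt_eq_zero_iff {a b : GF m} : wt m a b = 0 ↔ a = 0 ∧ b = 0 := by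
  refine ⟨fun h => ?_, by rintro ⟨rfl, rfl⟩; exact wt_zero_zero⟩
  have := card_le_one.mp (card_wt_eq_zero hodd hm).le (a, b) (by simpa using h) (0, 0)
    (by simpa using wt_zero_zero)
  simpa [Prod.ext_iff] using this

theorem wt_mem (a b : GF m) :
    wt m a b ∈ ({0, lowWeight m, midWeight m, highWeight m} : Finset ℕ) := by
  simp only [mem_insert, mem_singleton]
  by_contra! h
  have := card_wt_eq_of_ne hodd hm h.1 h.2.1 h.2.2.1 h.2.2.2
  rw [card_eq_zero, filter_eq_empty_iff] at this
  exact this (mem_univ (a, b)) rfl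

theorem image_wt : univ.image (fun c : GF m × GF m => wt m c.1 c.2) =
    {0, lowWeight m, midWeight m, highWeight m} := by
  refine Subset.antisymm (image_subset_iff.mpr fun c _ => wt_mem hodd hm c.1 c.2) ?_
  have := Nat.one_le_two_pow (n := m - 2)
  have := Nat.one_lt_two_pow (n := m - 1) (by omega)
  have hpos : ∀ v, 0 < #{c : GF m × GF m | wt m c.1 c.2 = v} →
      v ∈ univ.image (fun c : GF m × GF m => wt m c.1 c.2) := fun v hv => by
    obtain ⟨c, hc⟩ := card_pos.mp hv
    exact mem_image.mpr ⟨c, mem_univ c, (mem_filter.mp hc).2⟩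
  simp only [insert_subset_iff, singleton_subset_iff]
  refine ⟨mem_image.mpr ⟨0, mem_univ _, wt_zero_zero⟩, hpos _ ?_, hpos _ ?_, hpos _ ?_⟩
  · rw [card_wt_eq_lowWeight hodd hm]; exact Nat.mul_pos (by positivity) (by omega)
  · rw [card_wt_eq_midWeight hodd hm]; positivity
  · rw [card_wt_eq_highWeight hodd hm]; exact Nat.sub_pos_of_lt (by nlinarith)

theorem lowWeight_le_wt {c : GF m × GF m} (hc : c ≠ (0, 0)) : lowWeight m ≤ wt m c.1 c.2 := by
  obtain ⟨-, hLM, hMH⟩ := zero_lt_lowWeight_lt_midWeight_lt_highWeight hm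
  have h0 : wt m c.1 c.2 ≠ 0 := fun h => hc (Prod.ext_iff.mpr ((wt_eq_zero_iff hodd hm).mp h))
  have := wt_mem hodd hm c.1 c.2
  simp only [mem_insert, mem_singleton] at this
  omega

theorem exists_wt_eq_lowWeight : ∃ c : GF m × GF m, wt m c.1 c.2 = lowWeight m := by
  have : lowWeight m ∈ univ.image fun c : GF m × GF m => wt m c.1 c.2 := by
    rw [image_wt hodd hm]; simp
  obtain ⟨c, -, hc⟩ := mem_image.mp this
  exact ⟨c, hc⟩

theorem card_image_wt_erase_zero :
    #((univ.image fun c : GF m × GF m => wt m c.1 c.2).erase 0) = 3 := by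
  obtain ⟨hL, hLM, hMH⟩ := zero_lt_lowWeight_lt_midWeight_lt_highWeight hm
  rw [image_wt hodd hm, erase_insert (by simp [hL.ne, (hL.trans hLM).ne, (hL.trans (hLM.trans hMH)).ne])]
  exact card_eq_three.mpr ⟨_, _, _, hLM.ne, (hLM.trans hMH).ne, hMH.ne, rfl⟩

theorem codeword_injective : Function.Injective fun c : GF m × GF m => fun p : GF m × GF m =>
    if p ∈ D2 m then Tr m (c.1 * p.1 * p.2 + c.2 * p.1) else 0 := by
  intro c c' h
  have hwt : wt m (c.1 - c'.1) (c.2 - c'.2) = 0 := by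
    refine card_eq_zero.mpr (filter_eq_empty_iff.mpr fun p hp => ?_)
    have hp' := congrFun h p
    simp only [if_pos hp] at hp'
    rw [show (c.1 - c'.1) * p.1 * p.2 + (c.2 - c'.2) * p.1 =
      (c.1 * p.1 * p.2 + c.2 * p.1) - (c'.1 * p.1 * p.2 + c'.2 * p.1) by ring,
      CharTwo.sub_eq_add, tr_add, hp', CharTwo.add_self_eq_zero]
    exact zero_ne_one
  obtain ⟨h1, h2⟩ := (wt_eq_zero_iff hodd hm).mp hwt
  exact Prod.ext (sub_eq_zero.mp h1) (sub_eq_zero.mp h2)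

theorem card_image_codeword :
    #(univ.image fun c : GF m × GF m => fun p : GF m × GF m =>
      if p ∈ D2 m then Tr m (c.1 * p.1 * p.2 + c.2 * p.1) else 0) = 2 ^ (2 * m) := by
  rw [card_image_of_injective _ (codeword_injective hodd hm), card_univ, Fintype.card_prod,
    card_GF (by omega), ← pow_add, two_mul]

end WeightDistribution

theorem stmt13 (m : ℕ) (hm : 3 ≤ m) (hodd : Odd m) :
    let D2 : Finset (GaloisField 2 m × GaloisField 2 m) :=
      Finset.univ.filter (fun p => p.1 ≠ 0 ∧ Tr m (p.2 * p.1 ^ 2 + p.1 + p.2) = 0)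
    let wt : GaloisField 2 m × GaloisField 2 m → ℕ := fun c =>
      (D2.filter (fun p => Tr m (c.1 * p.1 * p.2 + c.2 * p.1) = 1)).card
    let A : ℕ → ℕ := fun w =>
      (Finset.univ.filter (fun c : GaloisField 2 m × GaloisField 2 m => wt c = w)).card
    A 0 = 1 ∧
    (∀ c : GaloisField 2 m × GaloisField 2 m, wt c = 0 → c = (0, 0)) ∧
    A (2 ^ m * (2 ^ (m - 2) - 1)) = 2 ^ (m - 2) * (2 ^ (m - 1) - 1) ∧
    A (2 ^ (m - 1) * (2 ^ (m - 1) - 1)) = 3 * 2 ^ (2 * m - 2) ∧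
    A (2 ^ (2 * m - 2)) = 2 ^ (m - 2) * (2 ^ (m - 1) + 1) - 1 ∧
    (∀ w : ℕ, w ≠ 0 → w ≠ 2 ^ m * (2 ^ (m - 2) - 1) →
      w ≠ 2 ^ (m - 1) * (2 ^ (m - 1) - 1) → w ≠ 2 ^ (2 * m - 2) → A w = 0) ∧
    D2.card = 2 ^ m * (2 ^ (m - 1) - 1) ∧
    (Finset.univ.image (fun c : GaloisField 2 m × GaloisField 2 m =>
        fun p : GaloisField 2 m × GaloisField 2 m =>
          if p ∈ D2 then Tr m (c.1 * p.1 * p.2 + c.2 * p.1) else 0)).card = 2 ^ (2 * m) ∧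
    (∀ c : GaloisField 2 m × GaloisField 2 m, c ≠ (0, 0) →
      2 ^ m * (2 ^ (m - 2) - 1) ≤ wt c) ∧
    (∃ c : GaloisField 2 m × GaloisField 2 m, wt c = 2 ^ m * (2 ^ (m - 2) - 1)) ∧
    ((Finset.univ.image (fun c : GaloisField 2 m × GaloisField 2 m => wt c)).erase 0).card
      = 3 := by
  intro _ _ _
  exact ⟨card_wt_eq_zero hodd hm, fun c hc => Prod.ext_iff.mpr ((wt_eq_zero_iff hodd hm).mp hc),
    card_wt_eq_lowWeight hodd hm, card_wt_eq_midWeight hodd hm, card_wt_eq_highWeight hodd hm,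
    fun _ => card_wt_eq_of_ne hodd hm, card_D2 hodd, card_image_codeword hodd hm,
    fun _ => lowWeight_le_wt hodd hm, exists_wt_eq_lowWeight hodd hm,
    card_image_wt_erase_zero hodd hm⟩
end
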